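/- arXiv:math/9809211 — 2 statements merged into one kernel-verified Lean document; each statement's English description precedes it below -/
import Mathlib

section
/- Let P be a group, p a prime, and let i, j ≥ 1 be natural numbers. Let x ∈ P^i and y ∈ P^j, let r ≥ 0 be a natural number, and let a be an integer divisible by p^r. Then: (1) (xy)^a ≡ x^a y^a (y,x)^{C(a,2)} (mod P^{i+j+max{1,r}}); (2) (x^a, y) ≡ (x,y)^a ((x,y),x)^{C(a,2)} (mod P^{i+j+1+max{1,r}}); (3) (x, y^a) ≡ (x,y)^a ((x,y),y)^{C(a,2)} (mod P^{i+j+1+max{1,r}}). Here C(a,2) = a(a−1)/2 is the integer binomial coefficient. -/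
/-- The descending `p`-central series of a group `P`, indexed so that
`pCentralSeries p P (i-1)` is the term `P^i` of the series `P^1 = P`,
`P^{i+1} = (P^i)^p [P^i, P]`. -/
def pCentralSeries (p : ℕ) (P : Type*) [Group P] : ℕ → Subgroup P
  | 0 => ⊤
  | n + 1 =>
    Subgroup.closure {x : P | ∃ y ∈ pCentralSeries p P n, x = y ^ p} ⊔
      ⁅pCentralSeries p P n, (⊤ : Subgroup P)⁆

/-- The commutator convention `(x, y) := x⁻¹y⁻¹xy`. -/
def commElt {P : Type*} [Group P] (x y : P) : P := x⁻¹ * y⁻¹ * x * y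

open scoped commutatorElement

/-! ### Auxiliary pure group-theoretic lemmas -/

section GroupAux

variable {G : Type*} [Group G]

lemma pCS.two_dvd_mul_pred' (a : ℤ) : 2 ∣ a * (a - 1) := by
  have := (Int.even_mul_succ_self (a-1)).two_dvd
  simpa [mul_comm] using this

lemma pCS.conj_zpow' (x y : G) (a : ℤ) : x⁻¹ * y ^ a * x = (x⁻¹ * y * x) ^ a := by
  have := conj_zpow (i := a) (a := x⁻¹) (b := y)
  simpa using this.symm

lemma pCS.swap_zpow {x y c : G} (h : y * x = x * (y * c)) (hcy : Commute c y) (a : ℤ) :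
    y ^ a * x = x * (y ^ a * c ^ a) := by
  have hconj : x⁻¹ * y * x = y * c := by
    calc x⁻¹ * y * x = x⁻¹ * (y * x) := by group
      _ = x⁻¹ * (x * (y * c)) := by rw [h]
      _ = y * c := by group
  have e1 : x⁻¹ * y ^ a * x = y ^ a * c ^ a := by
    rw [pCS.conj_zpow' x y a, hconj, hcy.symm.mul_zpow]
  calc y ^ a * x = x * (x⁻¹ * y ^ a * x) := by group
    _ = x * (y ^ a * c ^ a) := by rw [e1]

lemma pCS.swap_zpow_inv {x y c : G} (h : y * x = x * (y * c)) (hcx : Commute c x)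
    (hcy : Commute c y) (a : ℤ) : y ^ a * x⁻¹ = x⁻¹ * (y ^ a * c ^ (-a)) := by
  have h1 := pCS.swap_zpow h hcy a
  have hcxa : Commute (c ^ a) x := hcx.zpow_left a
  have e1 : x⁻¹ * y ^ a * x = y ^ a * c ^ a := by
    calc x⁻¹ * y ^ a * x = x⁻¹ * (y ^ a * x) := by group
      _ = x⁻¹ * (x * (y ^ a * c ^ a)) := by rw [h1]
      _ = y ^ a * c ^ a := by group
  have e3 : x * y ^ a * x⁻¹ * c ^ a = y ^ a := by
    calc x * y ^ a * x⁻¹ * c ^ a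
        = x * y ^ a * (x⁻¹ * c ^ a) * x⁻¹ * x := by group
      _ = x * y ^ a * (c ^ a * x⁻¹) * x⁻¹ * x := by rw [← hcxa.inv_right.eq]
      _ = x * (y ^ a * c ^ a) * x⁻¹ := by group
      _ = x * (x⁻¹ * y ^ a * x) * x⁻¹ := by rw [← e1]
      _ = y ^ a := by group
  calc y ^ a * x⁻¹ = x⁻¹ * (x * y ^ a * x⁻¹ * c ^ a) * c ^ (-a) := by group
    _ = x⁻¹ * y ^ a * c ^ (-a) := by rw [e3]
    _ = x⁻¹ * (y ^ a * c ^ (-a)) := by group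

/-- The "class two" power identity: if `c = (y,x)` commutes with `x` and `y` then
`(xy)^a = x^a y^a c^(a(a-1)/2)`. -/
lemma pCS.class2 {x y c : G} (h : y * x = x * (y * c)) (hcx : Commute c x)
    (hcy : Commute c y) (a : ℤ) :
    (x * y) ^ a = x ^ a * y ^ a * c ^ (a * (a - 1) / 2) := by
  induction a using Int.induction_on with
  | zero => simp
  | succ k ih =>
      set b : ℤ := (k : ℤ) with hb
      have harith : (b+1)*((b+1)-1)/2 = b + b*(b-1)/2 := by
        have h1 : (b+1)*((b+1)-1) = b*(b-1) + 2*b := by ring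
        have h2 := pCS.two_dvd_mul_pred' b
        omega
      set K : ℤ := b*(b-1)/2 with hK
      calc (x*y)^(b+1) = (x*y)^b * (x*y) := zpow_add_one _ _
        _ = x^b * y^b * c^K * (x*y) := by rw [ih]
        _ = x^b * (y^b * (c^K * x)) * y := by group
        _ = x^b * (y^b * (x * c^K)) * y := by rw [(hcx.zpow_left K).eq]
        _ = x^b * (y^b * x) * (c^K * y) := by group
        _ = x^b * (x * (y^b * c^b)) * (y * c^K) := by
              rw [pCS.swap_zpow h hcy, (hcy.zpow_left K).eq]
        _ = x^b * x * y^b * (c^b * y) * c^K := by group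
        _ = x^b * x * y^b * (y * c^b) * c^K := by rw [(hcy.zpow_left b).eq]
        _ = x^(b+1) * y^(b+1) * c^(b + K) := by
              rw [zpow_add_one x b, zpow_add_one y b, zpow_add c b K]; group
        _ = x^(b+1) * y^(b+1) * c^((b+1)*((b+1)-1)/2) := by rw [harith]
  | pred k ih =>
      set b : ℤ := -(k : ℤ) with hb
      have harith : (b-1)*((b-1)-1)/2 = b*(b-1)/2 - (b-1) := by
        have h1 : (b-1)*((b-1)-1) = b*(b-1) - 2*(b-1) := by ring
        have h2 := pCS.two_dvd_mul_pred' b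
        omega
      set K : ℤ := b*(b-1)/2 with hK
      calc (x*y)^(b-1) = (x*y)^b * (x*y)⁻¹ := zpow_sub_one _ _
        _ = x^b * y^b * c^K * (y⁻¹ * x⁻¹) := by rw [ih]; group
        _ = x^b * y^b * (c^K * y⁻¹) * x⁻¹ := by group
        _ = x^b * y^b * (y⁻¹ * c^K) * x⁻¹ := by rw [(hcy.zpow_left K).inv_right.eq]
        _ = x^b * y^(b-1) * (c^K * x⁻¹) := by
              rw [zpow_sub_one y b]; group
        _ = x^b * y^(b-1) * (x⁻¹ * c^K) := by rw [(hcx.zpow_left K).inv_right.eq]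
        _ = x^b * (y^(b-1) * x⁻¹) * c^K := by group
        _ = x^b * (x⁻¹ * (y^(b-1) * c^(-(b-1)))) * c^K := by
              rw [pCS.swap_zpow_inv h hcx hcy (b-1)]
        _ = x^(b-1) * y^(b-1) * c^(K - (b-1)) := by
              rw [zpow_sub_one x b, zpow_sub c K (b-1)]; group
        _ = x^(b-1) * y^(b-1) * c^((b-1)*((b-1)-1)/2) := by rw [harith]

lemma pCS.comm_pow_of_commute {a b : G} (h : Commute ⁅a, b⁆ b) (k : ℕ) :
    ⁅a, b ^ k⁆ = ⁅a, b⁆ ^ k := by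
  have h1 : a * b * a⁻¹ = ⁅a, b⁆ * b := by rw [commutatorElement_def]; group
  have h2 : a * b ^ k * a⁻¹ = ⁅a, b⁆ ^ k * b ^ k := by
    rw [← conj_pow, h1, h.mul_pow]
  calc ⁅a, b ^ k⁆ = a * b ^ k * a⁻¹ * (b ^ k)⁻¹ := commutatorElement_def _ _
    _ = ⁅a, b⁆ ^ k * b ^ k * (b ^ k)⁻¹ := by rw [h2]
    _ = ⁅a, b⁆ ^ k := by group

lemma pCS.part3_final (Y E W : G) (a K : ℤ) (h : Commute (W ^ K) E) :
    (Y ^ a * E ^ a * W ^ K)⁻¹ * Y ^ a = (E⁻¹) ^ a * (E * W⁻¹ * E⁻¹) ^ K := by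
  have h1 : Commute (E ^ (1-a)) ((W ^ K)⁻¹) := (h.symm.zpow_left (1-a)).inv_right
  have e2 : (E : G) ^ (-a) = E ^ (1-a) * E ^ (-1 : ℤ) := by
    rw [← zpow_add]; congr 1; ring
  calc (Y ^ a * E ^ a * W ^ K)⁻¹ * Y ^ a
      = (W ^ K)⁻¹ * E ^ (-a) := by group
    _ = (W ^ K)⁻¹ * (E ^ (1-a) * E ^ (-1 : ℤ)) := by rw [e2]
    _ = ((W ^ K)⁻¹ * E ^ (1-a)) * E ^ (-1 : ℤ) := by group
    _ = (E ^ (1-a) * (W ^ K)⁻¹) * E ^ (-1 : ℤ) := by rw [← h1.eq]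
    _ = (E⁻¹) ^ a * (E * W⁻¹ * E⁻¹) ^ K := by rw [conj_zpow]; group

end GroupAux

/-! ### Arithmetic lemmas -/

lemma pCS.dvd_choose2 {p : ℕ} (hp : p.Prime) {r : ℕ} {a : ℤ} (ha : (p:ℤ)^r ∣ a) :
    (p:ℤ) ^ (max 1 r - 1) ∣ a * (a - 1) / 2 := by
  rcases Nat.eq_zero_or_pos r with rfl | hr
  · simp
  obtain ⟨r', rfl⟩ : ∃ r', r = r' + 1 := ⟨r-1, by omega⟩
  have hmax : max 1 (r'+1) - 1 = r' := by omega
  rw [hmax]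
  obtain ⟨k, hk⟩ := ha
  have h2 : 2 * (a*(a-1)/2) = a*(a-1) := Int.mul_ediv_cancel' (pCS.two_dvd_mul_pred' a)
  rcases hp.eq_two_or_odd' with rfl | hodd
  · refine ⟨k * (a - 1), mul_left_cancel₀ (by norm_num : (2:ℤ) ≠ 0) ?_⟩
    rw [h2, hk]
    push_cast
    ring
  · rcases Int.even_or_odd k with ⟨k', hk'⟩ | hko
    · refine ⟨(p:ℤ) * k' * (a-1), mul_left_cancel₀ (by norm_num : (2:ℤ) ≠ 0) ?_⟩
      rw [h2, hk, hk']
      ring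
    · have hao : Odd a := by
        rw [hk]
        exact (((Int.odd_coe_nat p).2 hodd).pow).mul hko
      obtain ⟨t, ht⟩ := hao
      have hM : a * (a-1)/2 = a * t := by
        have : a * (a - 1) = 2 * (a * t) := by rw [ht]; ring
        omega
      rw [hM, hk]
      exact Dvd.dvd.mul_right (dvd_trans (pow_dvd_pow _ (by omega)) ⟨k, rfl⟩) t

lemma pCS.dvd_diff {p : ℕ} (hp : p.Prime) {r : ℕ} {b : ℤ} (hb : (p:ℤ)^r ∣ b) (hr : 1 ≤ r) :
    (p:ℤ) ^ (r + 1) ∣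
      ((p:ℤ)*b) * (((p:ℤ)*b) - 1) / 2 - (p:ℤ) * (b * (b - 1) / 2) := by
  set a : ℤ := (p:ℤ)*b with ha
  set D : ℤ := a * (a-1)/2 - (p:ℤ) * (b*(b-1)/2) with hD
  have h2a : 2 * (a*(a-1)/2) = a*(a-1) := Int.mul_ediv_cancel' (pCS.two_dvd_mul_pred' a)
  have h2b : 2 * (b*(b-1)/2) = b*(b-1) := Int.mul_ediv_cancel' (pCS.two_dvd_mul_pred' b)
  have key : 2 * D = (p:ℤ) * ((p:ℤ) - 1) * b^2 := by
    have h3 : 2 * D = 2*(a*(a-1)/2) - (p:ℤ)*(2*(b*(b-1)/2)) := by rw [hD]; ring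
    rw [h2a, h2b] at h3
    rw [h3, ha]; ring
  have hbb : (p:ℤ)^(2*r) ∣ b^2 := by
    rw [show (2*r) = r + r by ring, pow_add, sq]
    exact mul_dvd_mul hb hb
  have hrr : r + 1 ≤ 2*r := by omega
  rcases hp.eq_two_or_odd' with rfl | hodd
  · have hDb : D = b^2 := by
      have : 2 * D = 2 * b^2 := by rw [key]; push_cast; ring
      exact mul_left_cancel₀ (by norm_num) this
    rw [hDb]
    exact (pow_dvd_pow _ hrr).trans hbb
  · obtain ⟨s, hs⟩ : ∃ s : ℤ, (p:ℤ) - 1 = 2 * s := by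
      obtain ⟨t, ht⟩ := (Int.odd_coe_nat p).2 hodd
      exact ⟨t, by omega⟩
    have hDb : D = (p:ℤ) * s * b^2 := by
      have : 2 * D = 2 * ((p:ℤ) * s * b^2) := by rw [key, hs]; ring
      exact mul_left_cancel₀ (by norm_num) this
    rw [hDb]
    have hstep : (p:ℤ)^(r+1) ∣ (p:ℤ) * b^2 := by
      rw [pow_succ']
      exact mul_dvd_mul_left _ ((pow_dvd_pow _ (by omega : r ≤ 2*r)).trans hbb)
    obtain ⟨u, hu⟩ := hstep
    exact ⟨s * u, by rw [show (p:ℤ) * s * b^2 = ((p:ℤ) * b^2) * s by ring, hu]; ring⟩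

/-! ### Properties of the descending `p`-central series -/

namespace pCS

variable {P : Type*} [Group P] {p : ℕ}

local notation "Q" => pCentralSeries p P

lemma succ_def (n : ℕ) : Q (n+1) =
    Subgroup.closure {x : P | ∃ y ∈ Q n, x = y ^ p} ⊔ ⁅Q n, (⊤ : Subgroup P)⁆ := rfl

instance normal (n : ℕ) : (Q n).Normal := by
  induction n with
  | zero =>
      show (⊤ : Subgroup P).Normal
      exact inferInstance
  | succ n ih =>
      rw [succ_def]
      have h1 : (Subgroup.closure {x : P | ∃ y ∈ Q n, x = y ^ p}).Normal := by
        constructor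
        intro m hm g
        induction hm using Subgroup.closure_induction with
        | mem z hz =>
            obtain ⟨y, hy, rfl⟩ := hz
            exact Subgroup.subset_closure ⟨g * y * g⁻¹, ih.conj_mem y hy g, (conj_pow).symm⟩
        | one => simpa using Subgroup.one_mem _
        | mul a b _ _ iha ihb =>
            have : g * (a * b) * g⁻¹ = (g * a * g⁻¹) * (g * b * g⁻¹) := by group
            rw [this]; exact mul_mem iha ihb
        | inv a _ iha =>
            have : g * a⁻¹ * g⁻¹ = (g * a * g⁻¹)⁻¹ := by group
            rw [this]; exact inv_mem iha
      have h2 : (⁅Q n, (⊤ : Subgroup P)⁆).Normal := Subgroup.commutator_normal _ _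
      exact Subgroup.sup_normal _ _

lemma pow_p_mem {n : ℕ} {x : P} (hx : x ∈ Q n) : x ^ p ∈ Q (n+1) := by
  rw [succ_def]
  exact Subgroup.mem_sup_left (Subgroup.subset_closure ⟨x, hx, rfl⟩)

lemma comm_top_le (n : ℕ) : ⁅Q n, (⊤ : Subgroup P)⁆ ≤ Q (n+1) := by
  rw [succ_def]; exact le_sup_right

lemma succ_le (n : ℕ) : Q (n+1) ≤ Q n := by
  rw [succ_def]
  refine sup_le ?_ ?_
  · rw [Subgroup.closure_le]
    rintro z ⟨y, hy, rfl⟩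
    exact Subgroup.pow_mem _ hy p
  · exact (Subgroup.commutator_le_left _ _)

lemma le_of_le {m n : ℕ} (h : m ≤ n) : Q n ≤ Q m := by
  induction n with
  | zero => simp [Nat.le_zero.mp h]
  | succ n ih =>
      rcases Nat.lt_or_ge m (n+1) with h'|h'
      · exact (succ_le n).trans (ih (Nat.lt_succ_iff.mp h'))
      · have : m = n+1 := le_antisymm h h'
        subst this; exact le_rfl

lemma zpow_mem' {n : ℕ} {x : P} (hx : x ∈ Q n) (t : ℕ) {a : ℤ}
    (ha : (p : ℤ) ^ t ∣ a) : x ^ a ∈ Q (n + t) := by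
  induction t generalizing n x a with
  | zero => exact Subgroup.zpow_mem _ hx a
  | succ t ih =>
      obtain ⟨k, rfl⟩ := ha
      have : x ^ ((p:ℤ) ^ (t+1) * k) = (x ^ p) ^ ((p:ℤ) ^ t * k) := by
        rw [← zpow_natCast x p, ← zpow_mul]
        ring_nf
      rw [this]
      have := ih (pow_p_mem hx) (Dvd.intro k rfl)
      have heq : n + 1 + t = n + (t+1) := by omega
      rwa [heq] at this

/-- `u ≡ v mod N` iff equal in quotient. -/
lemma mem_iff_mk_eq {N : Subgroup P} [N.Normal] (u v : P) :
    u * v⁻¹ ∈ N ↔ (u : P ⧸ N) = (v : P ⧸ N) := by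
  rw [QuotientGroup.eq_iff_div_mem, div_eq_mul_inv]

lemma mk_commutatorElement {N : Subgroup P} [N.Normal] (u v : P) :
    ((⁅u, v⁆ : P) : P ⧸ N) = ⁅(u : P ⧸ N), (v : P ⧸ N)⁆ := by
  exact map_commutatorElement (QuotientGroup.mk' N) u v

lemma commute_mk {N : Subgroup P} [N.Normal] {u v : P} (h : ⁅u, v⁆ ∈ N) :
    Commute (u : P ⧸ N) (v : P ⧸ N) := by
  rw [← commutatorElement_eq_one_iff_commute, ← mk_commutatorElement,
    QuotientGroup.eq_one_iff]
  exact h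

lemma mk_central {n : ℕ} {h : P} (hh : h ∈ Q n) (z : P ⧸ (Q (n+1))) :
    Commute (h : P ⧸ (Q (n+1))) z := by
  induction z using QuotientGroup.induction_on with
  | _ t =>
    exact commute_mk (comm_top_le n (Subgroup.commutator_mem_commutator hh (Subgroup.mem_top t)))

/-- The key filtration property: `[Q m, Q n] ≤ Q (m+n+1)`. -/
lemma commutator_le_add (n : ℕ) : ∀ m : ℕ, ⁅Q m, Q n⁆ ≤ Q (m + n + 1) := by
  induction n with
  | zero => intro m; exact comm_top_le m
  | succ n ih =>
      intro m
      set N : Subgroup P := Q (m + (n+1) + 1) with hN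
      have h1 : ∀ g ∈ Q m, ∀ y ∈ Q n, ⁅g, y ^ p⁆ ∈ N := by
        intro g hg y hy
        have hc : ⁅g, y⁆ ∈ Q (m + n + 1) := ih m (Subgroup.commutator_mem_commutator hg hy)
        have hcp : ⁅g, y⁆ ^ p ∈ N := pow_p_mem hc
        have hNn : N.Normal := by rw [hN]; exact normal _
        rw [← QuotientGroup.eq_one_iff (N := N)]
        have hcy : Commute (⁅(g : P ⧸ N), (y : P ⧸ N)⁆) (y : P ⧸ N) := by
          rw [← mk_commutatorElement]
          exact mk_central (n := m + n + 1) hc _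
        have expand : ((⁅g, y ^ p⁆ : P) : P ⧸ N) = ⁅(g : P ⧸ N), (y : P ⧸ N) ^ p⁆ := by
          rw [mk_commutatorElement, QuotientGroup.mk_pow]
        rw [expand, comm_pow_of_commute hcy p, ← mk_commutatorElement,
          ← QuotientGroup.mk_pow, QuotientGroup.eq_one_iff]
        exact hcp
      have hNn : N.Normal := by rw [hN]; exact normal _
      have h2 : ⁅Q m, ⁅Q n, (⊤ : Subgroup P)⁆⁆ ≤ N := by
        set f := QuotientGroup.mk' N with hf
        have hbot : ∀ (H : Subgroup P), H ≤ N → H.map f = ⊥ := fun H h =>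
          (Subgroup.map_eq_bot_iff _).2 (by rwa [hf, QuotientGroup.ker_mk'])
        have key : (⁅Q m, ⁅Q n, (⊤ : Subgroup P)⁆⁆).map f = ⊥ := by
          rw [Subgroup.map_commutator, Subgroup.map_commutator,
            Subgroup.commutator_comm ((Q m).map f)]
          apply Subgroup.commutator_commutator_eq_bot_of_rotate
          · rw [← Subgroup.map_commutator, ← Subgroup.map_commutator]
            apply hbot
            have s1 : ⁅(⊤ : Subgroup P), Q m⁆ ≤ Q (m+1) := by
              rw [Subgroup.commutator_comm]; exact comm_top_le m
            have s2 : ⁅⁅(⊤ : Subgroup P), Q m⁆, Q n⁆ ≤ ⁅Q (m+1), Q n⁆ :=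
              Subgroup.commutator_mono s1 le_rfl
            refine s2.trans ((ih (m+1)).trans ?_)
            rw [hN]
            exact le_of_le (by omega)
          · rw [← Subgroup.map_commutator, ← Subgroup.map_commutator]
            apply hbot
            have s2 : ⁅⁅Q m, Q n⁆, (⊤ : Subgroup P)⁆ ≤ ⁅Q (m+n+1), (⊤ : Subgroup P)⁆ :=
              Subgroup.commutator_mono (ih m) le_rfl
            refine s2.trans ((comm_top_le (m+n+1)).trans ?_)
            rw [hN]
            exact le_of_le (by omega)
        have hker : ⁅Q m, ⁅Q n, (⊤ : Subgroup P)⁆⁆ ≤ f.ker := (Subgroup.map_eq_bot_iff _).mp key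
        rwa [hf, QuotientGroup.ker_mk'] at hker
      rw [Subgroup.commutator_le]
      intro g hg h hh
      rw [succ_def, Subgroup.sup_eq_closure] at hh
      induction hh using Subgroup.closure_induction with
      | mem z hz =>
          rcases hz with hz | hz
          · induction hz using Subgroup.closure_induction with
            | mem w hw =>
                obtain ⟨y, hy, rfl⟩ := hw
                exact h1 g hg y hy
            | one => simpa using Subgroup.one_mem N
            | mul a b _ _ iha ihb =>
                have hid : ⁅g, a * b⁆ = ⁅g, a⁆ * (a * ⁅g, b⁆ * a⁻¹) := by
                  simp only [commutatorElement_def]; group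
                rw [hid]
                exact mul_mem iha (hNn.conj_mem _ ihb a)
            | inv a _ iha =>
                have hid : ⁅g, a⁻¹⁆ = a⁻¹ * ⁅g, a⁆⁻¹ * a := by
                  simp only [commutatorElement_def]; group
                rw [hid, show (a:P)⁻¹ * ⁅g, a⁆⁻¹ * a = a⁻¹ * ⁅g, a⁆⁻¹ * a⁻¹⁻¹ by group]
                exact hNn.conj_mem _ (inv_mem iha) a⁻¹
          · exact h2 (Subgroup.commutator_mem_commutator hg hz)
      | one => simpa using Subgroup.one_mem N
      | mul a b _ _ iha ihb =>
          have hid : ⁅g, a * b⁆ = ⁅g, a⁆ * (a * ⁅g, b⁆ * a⁻¹) := by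
            simp only [commutatorElement_def]; group
          rw [hid]
          exact mul_mem iha (hNn.conj_mem _ ihb a)
      | inv a _ iha =>
          have hid : ⁅g, a⁻¹⁆ = a⁻¹ * ⁅g, a⁆⁻¹ * a := by
            simp only [commutatorElement_def]; group
          rw [hid, show (a:P)⁻¹ * ⁅g, a⁆⁻¹ * a = a⁻¹ * ⁅g, a⁆⁻¹ * a⁻¹⁻¹ by group]
          exact hNn.conj_mem _ (inv_mem iha) a⁻¹

lemma commElt_mem {m n : ℕ} {x y : P} (hx : x ∈ Q m) (hy : y ∈ Q n) :
    commElt x y ∈ Q (m + n + 1) := by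
  have he : commElt x y = ⁅x⁻¹, y⁻¹⁆ := by
    simp only [commElt, commutatorElement_def, inv_inv]
  rw [he]
  exact commutator_le_add n m (Subgroup.commutator_mem_commutator (inv_mem hx) (inv_mem hy))

lemma S1base (i j : ℕ) {x y : P} (hx : x ∈ Q i) (hy : y ∈ Q j) (a : ℤ) :
    (x*y)^a * (x^a * y^a * commElt y x ^ (a*(a-1)/2))⁻¹ ∈ Q (i + j + 2) := by
  set N : Subgroup P := Q (i+j+2) with hN
  haveI : N.Normal := normal _
  have hc : commElt y x ∈ Q (i+j+1) := le_of_le (by omega) (commElt_mem hy hx)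
  have hcx : Commute ((commElt y x : P) : P ⧸ N) ((x : P) : P ⧸ N) := by
    apply commute_mk
    refine le_of_le (p := p) (by omega)
      (commutator_le_add i (i+j+1) (Subgroup.commutator_mem_commutator hc hx))
  have hcy : Commute ((commElt y x : P) : P ⧸ N) ((y : P) : P ⧸ N) := by
    apply commute_mk
    refine le_of_le (p := p) (by omega)
      (commutator_le_add j (i+j+1) (Subgroup.commutator_mem_commutator hc hy))
  rw [mem_iff_mk_eq]
  simp only [QuotientGroup.mk_mul, QuotientGroup.mk_zpow]
  have hrel : ((y : P) : P ⧸ N) * x = (x : P ⧸ N) * ((y : P ⧸ N) * ((commElt y x : P) : P ⧸ N)) := by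
    have hP : y * x = x * (y * commElt y x) := by simp only [commElt]; group
    rw [← QuotientGroup.mk_mul, ← QuotientGroup.mk_mul, ← QuotientGroup.mk_mul, hP]
  exact class2 hrel hcx hcy a

lemma pow_p_congr {n : ℕ} {g h : P} (hh : h ∈ Q n) :
    (g * h)^p * ((g^p)⁻¹) ∈ Q (n+1) := by
  haveI : (Q (n+1)).Normal := normal _
  rw [mem_iff_mk_eq, QuotientGroup.mk_pow, QuotientGroup.mk_pow, QuotientGroup.mk_mul]
  have hcomm : Commute ((g : P) : P ⧸ Q (n+1)) ((h : P) : P ⧸ Q (n+1)) :=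
    (mk_central hh _).symm
  rw [hcomm.mul_pow]
  have h1 : ((h : P) : P ⧸ Q (n+1))^p = 1 := by
    rw [← QuotientGroup.mk_pow, QuotientGroup.eq_one_iff]
    exact pow_p_mem hh
  rw [h1, mul_one]

lemma S1 (hp : p.Prime) (r : ℕ) (i j : ℕ) {x y : P} (hx : x ∈ Q i) (hy : y ∈ Q j)
    {a : ℤ} (ha : (p:ℤ)^r ∣ a) :
    (x*y)^a * (x^a * y^a * commElt y x ^ (a*(a-1)/2))⁻¹ ∈ Q (i + j + max 1 r + 1) := by
  induction r generalizing a with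
  | zero => exact le_of_le (by omega) (S1base i j hx hy a)
  | succ r ih =>
      rcases Nat.eq_zero_or_pos r with rfl | hr
      · exact le_of_le (by omega) (S1base i j hx hy a)
      obtain ⟨k, hk⟩ := ha
      have hab : a = (p:ℤ) * ((p:ℤ)^r * k) := by rw [hk, pow_succ']; ring
      set b : ℤ := (p:ℤ)^r * k with hb
      have hbd : (p:ℤ)^r ∣ b := ⟨k, rfl⟩
      have ihb := ih hbd
      rw [show i + j + max 1 r + 1 = i+j+r+1 by omega] at ihb
      set c : P := commElt y x with hc
      have hcm : c ∈ Q (i+j+1) := le_of_le (by omega) (commElt_mem hy hx)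
      set Kb : ℤ := b*(b-1)/2 with hKb
      set Ka : ℤ := a*(a-1)/2 with hKa
      set F : P := x^b * y^b * c^Kb with hF
      set N : Subgroup P := Q (i + j + max 1 (r+1) + 1) with hN
      haveI : N.Normal := by rw [hN]; exact normal _
      have hNeq : N = Q ((i+j+r+1) + 1) := by rw [hN]; congr 1
      -- Step A : (x*y)^a ≡ F^p mod N
      have stepA : ((x*y)^a) * ((F^p)⁻¹) ∈ N := by
        have hh : F⁻¹ * (x*y)^b ∈ Q (i+j+r+1) := by
          have h2 := (normal (p := p) (i+j+r+1)).conj_mem _ ihb F⁻¹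
          rw [show F⁻¹ * ((x*y)^b * F⁻¹) * F⁻¹⁻¹ = F⁻¹ * (x*y)^b by group] at h2
          exact h2
        have h3 := pow_p_congr (g := F) hh
        rw [show F * (F⁻¹ * (x*y)^b) = (x*y)^b by group] at h3
        have h4 : (x*y)^a = ((x*y)^b)^p := by
          rw [hab, mul_comm, zpow_mul, zpow_natCast]
        rw [hNeq, h4]
        exact h3
      -- Step B : F^p ≡ x^a y^a c^Ka mod N
      have stepB : (F^p) * ((x^a * y^a * c^Ka)⁻¹) ∈ N := by
        have hxb : x^b ∈ Q (i+r) := zpow_mem' hx r hbd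
        have hyb : y^b ∈ Q (j+r) := zpow_mem' hy r hbd
        have hcKb : c^Kb ∈ Q (i+j+r) := by
          have hdv : (p:ℤ)^(r-1) ∣ Kb := by
            have hdc := dvd_choose2 hp hbd
            rwa [show max 1 r - 1 = r-1 by omega] at hdc
          have := zpow_mem' hcm (r-1) hdv
          exact le_of_le (by omega) this
        have c1 : Commute ((x^b : P) : P ⧸ N) ((y^b : P) : P ⧸ N) :=
          commute_mk (le_of_le (by omega)
            (commutator_le_add (j+r) (i+r) (Subgroup.commutator_mem_commutator hxb hyb)))
        have c2 : Commute ((x^b : P) : P ⧸ N) ((c^Kb : P) : P ⧸ N) :=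
          commute_mk (le_of_le (by omega)
            (commutator_le_add (i+j+r) (i+r) (Subgroup.commutator_mem_commutator hxb hcKb)))
        have c3 : Commute ((y^b : P) : P ⧸ N) ((c^Kb : P) : P ⧸ N) :=
          commute_mk (le_of_le (by omega)
            (commutator_le_add (i+j+r) (j+r) (Subgroup.commutator_mem_commutator hyb hcKb)))
        have e1 : (x^b)^(p:ℕ) = x^a := by
          rw [← zpow_natCast (x^b) p, ← zpow_mul, hab, mul_comm]
        have e2 : (y^b)^(p:ℕ) = y^a := by
          rw [← zpow_natCast (y^b) p, ← zpow_mul, hab, mul_comm]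
        have e3 : (c^Kb)^(p:ℕ) = c^((p:ℤ)*Kb) := by
          rw [← zpow_natCast (c^Kb) p, ← zpow_mul, mul_comm]
        have hDmem : c^(Ka - (p:ℤ)*Kb) ∈ N := by
          have hdd : (p:ℤ)^(r+1) ∣ Ka - (p:ℤ)*Kb := by
            have := dvd_diff hp hbd (by omega : 1 ≤ r)
            rw [hKa, hKb, hab]
            exact this
          have := zpow_mem' hcm (r+1) hdd
          rw [hNeq]
          rwa [show (i+j+r+1)+1 = i+j+1+(r+1) by omega]
        rw [mem_iff_mk_eq]
        calc ((F^p : P) : P ⧸ N) = (((x^b : P) : P ⧸ N) * ((y^b : P) : P ⧸ N) * ((c^Kb : P) : P ⧸ N))^p := by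
              rw [hF]; simp only [QuotientGroup.mk_pow, QuotientGroup.mk_mul]
          _ = (((x^b : P) : P ⧸ N))^p * (((y^b : P) : P ⧸ N))^p * (((c^Kb : P) : P ⧸ N))^p := by
              rw [(c2.mul_left c3).mul_pow, c1.mul_pow]
          _ = (((x^b)^(p:ℕ) : P) : P ⧸ N) * (((y^b)^(p:ℕ) : P) : P ⧸ N) * (((c^Kb)^(p:ℕ) : P) : P ⧸ N) := by
              simp only [QuotientGroup.mk_pow]
          _ = ((x^a : P) : P ⧸ N) * ((y^a : P) : P ⧸ N) * ((c^((p:ℤ)*Kb) : P) : P ⧸ N) := by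
              rw [e1, e2, e3]
          _ = ((x^a * y^a * c^Ka : P) : P ⧸ N) := by
              have hsplit : (c^Ka : P) = c^((p:ℤ)*Kb) * c^(Ka - (p:ℤ)*Kb) := by
                rw [← zpow_add]; congr 1; ring
              have hone : ((c^(Ka - (p:ℤ)*Kb) : P) : P ⧸ N) = 1 :=
                (QuotientGroup.eq_one_iff _).mpr hDmem
              simp only [QuotientGroup.mk_mul, hsplit, hone, mul_one]
      rw [mem_iff_mk_eq] at stepA stepB ⊢
      exact stepA.trans stepB

lemma S2 (hp : p.Prime) (r : ℕ) (i j : ℕ) {x y : P} (hx : x ∈ Q i) (hy : y ∈ Q j)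
    {a : ℤ} (ha : (p:ℤ)^r ∣ a) :
    commElt (x^a) y * (commElt x y ^ a * commElt (commElt x y) x ^ (a*(a-1)/2))⁻¹ ∈
      Q (i + j + max 1 r + 2) := by
  set c : P := commElt x y with hc
  have hcm : c ∈ Q (i+j+1) := commElt_mem hx hy
  set N : Subgroup P := Q (i+j+max 1 r+2) with hN
  haveI : N.Normal := by rw [hN]; exact normal _
  have key : (x*c)^a * (x^a * c^a * commElt c x ^ (a*(a-1)/2))⁻¹ ∈ N :=
    le_of_le (by omega) (S1 hp r i (i+j+1) hx hcm ha)
  have h1 : y⁻¹ * x^a * y = (x*c)^a := by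
    have hconj : y⁻¹ * x * y = x * c := by rw [hc]; simp only [commElt]; group
    rw [conj_zpow' y x a, hconj]
  have hid : commElt (x^a) y = x^(-a) * (x*c)^a := by
    calc commElt (x^a) y = x^(-a) * (y⁻¹ * x^a * y) := by
          simp only [commElt]; rw [zpow_neg]; group
      _ = x^(-a) * (x*c)^a := by rw [h1]
  rw [mem_iff_mk_eq, hid]
  rw [mem_iff_mk_eq] at key
  simp only [QuotientGroup.mk_mul, QuotientGroup.mk_zpow] at key ⊢
  rw [key]
  group

lemma S3 (hp : p.Prime) (r : ℕ) (i j : ℕ) {x y : P} (hx : x ∈ Q i) (hy : y ∈ Q j)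
    {a : ℤ} (ha : (p:ℤ)^r ∣ a) :
    commElt x (y^a) * (commElt x y ^ a * commElt (commElt x y) y ^ (a*(a-1)/2))⁻¹ ∈
      Q (i + j + max 1 r + 2) := by
  have hm1 : 1 ≤ max 1 r := le_max_left 1 r
  set K : ℤ := a*(a-1)/2 with hK
  set e : P := commElt y x with he
  set w : P := commElt e y with hw
  have hem : e ∈ Q (i+j+1) := le_of_le (by omega) (commElt_mem hy hx)
  have hwm : w ∈ Q (i+2*j+2) := by
    have := commElt_mem hem hy
    exact le_of_le (by omega) this
  set N : Subgroup P := Q (i+j+max 1 r+2) with hN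
  haveI : N.Normal := by rw [hN]; exact normal _
  have key : (y*e)^a * (y^a * e^a * w^K)⁻¹ ∈ N :=
    le_of_le (by omega) (S1 hp r j (i+j+1) hy hem ha)
  -- identities
  have h1 : x⁻¹ * y^a * x = (y*e)^a := by
    have hconj : x⁻¹ * y * x = y * e := by rw [he]; simp only [commElt]; group
    rw [conj_zpow' x y a, hconj]
  have hid : commElt x (y^a) = ((y*e)^a)⁻¹ * y^a := by
    calc commElt x (y^a) = (x⁻¹ * y^a * x)⁻¹ * y^a := by simp only [commElt]; group
      _ = ((y*e)^a)⁻¹ * y^a := by rw [h1]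
  have hd : commElt x y = e⁻¹ := by rw [he]; simp only [commElt]; group
  have hv : commElt e⁻¹ y = e * w⁻¹ * e⁻¹ := by
    rw [hw, he]; simp only [commElt]; group
  -- commutation of w^K with e modulo N
  have hwK : w^K ∈ Q (i+2*j+2+(max 1 r-1)) := by
    apply zpow_mem' hwm
    exact dvd_choose2 hp ha
  have hcomm : Commute ((w^K : P) : P ⧸ N) ((e : P) : P ⧸ N) := by
    apply commute_mk
    refine le_of_le (p := p) (by omega)
      (commutator_le_add (i+j+1) (i+2*j+2+(max 1 r-1))
        (Subgroup.commutator_mem_commutator hwK hem))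
  rw [mem_iff_mk_eq, hid, hd, hv]
  rw [mem_iff_mk_eq] at key
  simp only [QuotientGroup.mk_mul, QuotientGroup.mk_zpow, QuotientGroup.mk_inv] at key hcomm ⊢
  rw [key]
  exact part3_final _ _ _ a K hcomm

end pCS

/-- Lemma 4 (i): congruences for powers and commutators relative to the descending
`p`-central series.  For `x ∈ P^i`, `y ∈ P^j` and `a ∈ pʳℤ` one has
`(xy)^a ≡ x^a y^a (y,x)^{a(a-1)/2} mod P^{i+j+max(1,r)}`,
`(x^a,y) ≡ (x,y)^a ((x,y),x)^{a(a-1)/2} mod P^{i+j+1+max(1,r)}`, and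
`(x,y^a) ≡ (x,y)^a ((x,y),y)^{a(a-1)/2} mod P^{i+j+1+max(1,r)}`,
where `g ≡ h (mod H)` means `g * h⁻¹ ∈ H`. -/
theorem pCentralSeries_congruences
    (p : ℕ) (hp : p.Prime) (P : Type*) [Group P]
    (i j : ℕ) (hi : 1 ≤ i) (hj : 1 ≤ j) (x y : P)
    (hx : x ∈ pCentralSeries p P (i - 1)) (hy : y ∈ pCentralSeries p P (j - 1))
    (r : ℕ) (a : ℤ) (ha : (p : ℤ) ^ r ∣ a) :
    ((x * y) ^ a * (x ^ a * y ^ a * commElt y x ^ (a * (a - 1) / 2))⁻¹ ∈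
        pCentralSeries p P (i + j + max 1 r - 1)) ∧
    (commElt (x ^ a) y *
        (commElt x y ^ a * commElt (commElt x y) x ^ (a * (a - 1) / 2))⁻¹ ∈
        pCentralSeries p P (i + j + max 1 r)) ∧
    (commElt x (y ^ a) *
        (commElt x y ^ a * commElt (commElt x y) y ^ (a * (a - 1) / 2))⁻¹ ∈
        pCentralSeries p P (i + j + max 1 r)) := by
  have hm1 : 1 ≤ max 1 r := le_max_left 1 r
  obtain ⟨i', rfl⟩ : ∃ i', i = i' + 1 := ⟨i-1, by omega⟩
  obtain ⟨j', rfl⟩ : ∃ j', j = j' + 1 := ⟨j-1, by omega⟩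
  simp only [Nat.add_sub_cancel] at hx hy
  refine ⟨?_, ?_, ?_⟩
  · rw [show i'+1+(j'+1)+max 1 r - 1 = i'+j'+max 1 r+1 by omega]
    exact pCS.S1 hp r i' j' hx hy ha
  · rw [show i'+1+(j'+1)+max 1 r = i'+j'+max 1 r+2 by omega]
    exact pCS.S2 hp r i' j' hx hy ha
  · rw [show i'+1+(j'+1)+max 1 r = i'+j'+max 1 r+2 by omega]
    exact pCS.S3 hp r i' j' hx hy ha
end

section
/- Let G be a non-trivial finite solvable group. Then the Frattini subgroup Φ(G) is a proper subgroup of the Fitting subgroup F(G), i.e. Φ(G) ≤ F(G) and Φ(G) ≠ F(G). -/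
/-!
Since `Φ(G)` is a nilpotent normal subgroup, `Φ(G) ≤ F(G)`. For properness, the solvable group
`G/Φ(G)` is non-trivial and so has a non-trivial normal `p`-subgroup `K`; let `N` be its preimage
and `P` a Sylow `p`-subgroup of `N`. As `N/Φ(G)` is a `p`-group, `P` maps onto `K` and
`N = PΦ(G)`. The Frattini argument gives `G = N_G(P) N = N_G(P) Φ(G)`, hence `N_G(P) = G`: so `P`
is a nilpotent normal subgroup of `G`, lying in `F(G)` but not in `Φ(G)`.
-/

/-- The Fitting subgroup of a group: the join of all nilpotent normal subgroups. -/
def fittingSubgroup (G : Type*) [Group G] : Subgroup G :=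
  ⨆ N : {N : Subgroup G // N.Normal ∧ Group.IsNilpotent N}, (N : Subgroup G)

open Subgroup

lemma le_fittingSubgroup {G : Type*} [Group G] (N : Subgroup G) (hN : N.Normal)
    (hN' : Group.IsNilpotent N) : N ≤ fittingSubgroup G :=
  le_iSup (fun N : {N : Subgroup G // N.Normal ∧ Group.IsNilpotent N} => (N : Subgroup G))
    ⟨N, hN, hN'⟩

lemma frattini_ne_top (G : Type*) [Group G] [Nontrivial G] [IsCoatomic (Subgroup G)] :
    frattini G ≠ ⊤ := by
  obtain ⟨M, hM⟩ := IsCoatomic.exists_coatom (α := Subgroup G)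
  exact fun h => hM.1 (top_le_iff.mp (h ▸ frattini_le_coatom hM))

theorem Group.IsSolvable.exists_normal_isMulCommutative_ne_bot (G : Type*) [Group G]
    [Nontrivial G] [Group.IsSolvable G] :
    ∃ A : Subgroup G, A.Normal ∧ IsMulCommutative A ∧ A ≠ ⊥ := by
  classical
  have hex : ∃ n, derivedSeries G (n + 1) = ⊥ := by
    obtain ⟨n, hn⟩ := Group.IsSolvable.solvable (G := G)
    exact ⟨n, le_bot_iff.mp (hn ▸ derivedSeries_antitone G n.le_succ)⟩
  refine ⟨derivedSeries G (Nat.find hex), derivedSeries_normal G _, ?_, ?_⟩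
  · rw [← le_centralizer_iff_isMulCommutative, ← commutator_eq_bot_iff_le_centralizer,
      ← derivedSeries_succ]
    exact Nat.find_spec hex
  · cases h : Nat.find hex with
    | zero => simpa only [derivedSeries_zero] using top_ne_bot
    | succ k => exact Nat.find_min hex (h ▸ k.lt_succ_self)

theorem Group.IsSolvable.exists_normal_isPGroup_ne_bot (G : Type*) [Group G] [Finite G]
    [Nontrivial G] [Group.IsSolvable G] :
    ∃ p, p.Prime ∧ ∃ K : Subgroup G, K.Normal ∧ IsPGroup p K ∧ K ≠ ⊥ := by
  obtain ⟨A, hA, hAcomm, hA_ne_bot⟩ := exists_normal_isMulCommutative_ne_bot G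
  obtain ⟨p, hp, hpA⟩ :=
    Nat.exists_prime_and_dvd ((Subgroup.card_eq_one (H := A)).not.mpr hA_ne_bot)
  have := Fact.mk hp
  obtain ⟨P⟩ : Nonempty (Sylow p A) := Sylow.nonempty
  -- `P` is normal in the abelian group `A`, so characteristic in `A` and thus normal in `G`.
  have := P.characteristic_of_normal inferInstance
  refine ⟨p, hp, P.map A.subtype, inferInstance, P.2.map _, ?_⟩
  rw [Ne, map_eq_bot_iff_of_injective _ A.subtype_injective]
  exact P.ne_bot_of_dvd_card hpA

theorem Sylow.map_map_subtype_comap_eq {G Q : Type*} [Group G] [Group Q] [Finite G] {p : ℕ}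
    [Fact p.Prime] {f : G →* Q} (hf : Function.Surjective f) {K : Subgroup Q}
    (hK : IsPGroup p K) (P : Sylow p (K.comap f)) :
    ((P : Subgroup (K.comap f)).map (K.comap f).subtype).map f = K := by
  let PK : Sylow p K := P.mapSurjective (f.subgroupComap_surjective_of_surjective K hf)
  have hPK : (PK : Subgroup K) = ⊤ := (PK.3 (hK.to_subgroup ⊤) le_top).symm
  calc ((P : Subgroup (K.comap f)).map (K.comap f).subtype).map f
      = (PK : Subgroup K).map K.subtype := by
        simp only [PK, Sylow.coe_mapSurjective, map_map]
        rfl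
    _ = K := by rw [hPK, ← MonoidHom.range_eq_map, range_subtype]

theorem Sylow.normal_of_le_sup_frattini {G : Type*} [Group G] [Finite G] {p : ℕ} [Fact p.Prime]
    {N : Subgroup G} [N.Normal] (P : Sylow p N)
    (hN : N ≤ (P : Subgroup N).map N.subtype ⊔ frattini G) :
    ((P : Subgroup N).map N.subtype).Normal := by
  have hsup : normalizer ((P : Subgroup N).map N.subtype : Set G) ⊔ frattini G = ⊤ := by
    refine top_le_iff.mp (P.normalizer_sup_eq_top ▸ sup_le le_sup_left ?_)
    exact hN.trans (sup_le_sup_right le_normalizer _)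
  exact normalizer_eq_top_iff.mp (frattini_nongenerating hsup)

/-- In a non-trivial finite solvable group, the Frattini subgroup is a proper
subgroup of the Fitting subgroup. -/
theorem frattini_lt_fitting_of_finite_solvable
    (G : Type*) [Group G] [Finite G] [Nontrivial G] [Group.IsSolvable G] :
    frattini G < fittingSubgroup G := by
  refine lt_of_le_of_ne (le_fittingSubgroup _ inferInstance frattini_nilpotent) fun hΦF => ?_
  have := QuotientGroup.nontrivial_iff.mpr (frattini_ne_top G)
  obtain ⟨p, hp, K, hK, hKp, hK_ne_bot⟩ :=
    Group.IsSolvable.exists_normal_isPGroup_ne_bot (G ⧸ frattini G)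
  have := Fact.mk hp
  let π := QuotientGroup.mk' (frattini G)
  let N := K.comap π
  obtain ⟨P⟩ : Nonempty (Sylow p N) := Sylow.nonempty
  have hPK : ((P : Subgroup N).map N.subtype).map π = K :=
    P.map_map_subtype_comap_eq (QuotientGroup.mk'_surjective _) hKp
  have hN : N ≤ (P : Subgroup N).map N.subtype ⊔ frattini G := by
    rw [← QuotientGroup.ker_mk' (frattini G), ← comap_map_eq, hPK]
  have hPΦ : (P : Subgroup N).map N.subtype ≤ frattini G :=
    hΦF ▸ le_fittingSubgroup _ (P.normal_of_le_sup_frattini hN) (P.2.map _).isNilpotent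
  apply hK_ne_bot
  rw [← hPK, Subgroup.map_eq_bot_iff, QuotientGroup.ker_mk']
  exact hPΦ
end
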